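/- arXiv:2012.11722 — 2 statements merged into one kernel-verified Lean document; each statement's English description precedes it below -/
import Mathlib

section
/- Let a₁,…,a_m ∈ ℝⁿ be positively linearly independent unit vectors. Then there exists σ > 0 such that for all λ₁,…,λ_m ≥ 0 one has ∑ᵢ λᵢ ≤ σ‖∑ᵢ λᵢ aᵢ‖. -/
theorem PLICQ_implies_inverse_triangle_ineq {n m : ℕ}
    (a : Fin m → EuclideanSpace ℝ (Fin n))
    (hunit : ∀ i, ‖a i‖ = 1)
    (hpli : ∀ α : Fin m → ℝ, (∀ i, 0 ≤ α i) → ∑ i, α i • a i = 0 → ∀ i, α i = 0) :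
    ∃ σ : ℝ, 0 < σ ∧ ∀ lam : Fin m → ℝ, (∀ i, 0 ≤ lam i) →
      ∑ i, lam i ≤ σ * ‖∑ i, lam i • a i‖ := by
  rcases Nat.eq_zero_or_pos m with hm | hm
  · subst hm
    exact ⟨1, one_pos, fun lam _ => by simp⟩
  -- the simplex is compact and nonempty
  have hne : (stdSimplex ℝ (Fin m)).Nonempty := ⟨fun _ => 1 / m, by
    constructor
    · intro i; positivity
    · simp [Finset.sum_const, Finset.card_univ]
      field_simp⟩
  have hcont : Continuous fun lam : Fin m → ℝ => ‖∑ i, lam i • a i‖ := by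
    apply Continuous.norm
    exact continuous_finset_sum _ fun i _ => ((continuous_apply i)).smul continuous_const
  obtain ⟨c, hcmem, hcmin⟩ :=
    (isCompact_stdSimplex ℝ (Fin m)).exists_isMinOn hne hcont.continuousOn
  set g : (Fin m → ℝ) → ℝ := fun lam => ‖∑ i, lam i • a i‖ with hg
  have hcpos : 0 < g c := by
    rcases hcmem with ⟨hc0, hc1⟩
    have hne0 : ∑ i, c i • a i ≠ 0 := by
      intro h
      have := hpli c hc0 h
      have : ∑ i, c i = 0 := by simp [this]
      rw [hc1] at this; norm_num at this
    simpa [g] using norm_pos_iff.mpr hne0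
  refine ⟨1 / g c, by positivity, fun lam hlam => ?_⟩
  set t := ∑ i, lam i with ht
  have htnn : 0 ≤ t := Finset.sum_nonneg fun i _ => hlam i
  rcases htnn.eq_or_lt with h0 | htpos
  · rw [← h0]
    positivity
  · -- lam / t is in the simplex
    have hmem : (fun i => lam i / t) ∈ stdSimplex ℝ (Fin m) := by
      constructor
      · intro i; exact div_nonneg (hlam i) htnn
      · rw [← Finset.sum_div, ← ht, div_self htpos.ne']
    have hle : g c ≤ g fun i => lam i / t := hcmin hmem
    have heq : g (fun i => lam i / t) = (1 / t) * g lam := by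
      simp only [g, ← norm_smul_of_nonneg (by positivity : (0:ℝ) ≤ 1 / t),
        Finset.smul_sum]
      congr 1
      apply Finset.sum_congr rfl
      intro i _
      rw [smul_smul]
      congr 1
      field_simp
    rw [heq] at hle
    have : g c * t ≤ g lam := by
      calc g c * t ≤ (1 / t * g lam) * t := by
            exact mul_le_mul_of_nonneg_right hle htnn
        _ = g lam := by field_simp
    rw [div_mul_eq_mul_div, le_div_iff₀ hcpos]
    linarith [this]
end

section
/- Under the assumptions of the previous statement (sliding: ⟨x(t),a(t)⟩ = 0, dynamics ẋ = −η a + (0,3), θ̇ ≡ θ̇* constant, with η given by η(t) = 3 sin θ(t) − θ̇*(x₁ sin θ − x₂ cos θ)), the function η satisfies the ODE η̇(t) = 6 θ̇* cos θ(t) for a.e. t ∈ [t*, T], and hence η(t) = η(t*) + 6(sin(θ̇*(t − t*) + θ*) − sin θ*) where θ* = θ(t*). -/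
open MeasureTheory

/-- On the sliding interval the multiplier satisfies `η̇ = 6 θ̇* cos θ` and hence admits the
explicit integrated form. -/
theorem multiplier_ODE_and_integration
    (T tstar : ℝ) (htT : tstar < T)
    (θ : ℝ → ℝ) (θdotstar : ℝ)
    (hθ : ∀ t ∈ Set.Icc tstar T, HasDerivAt θ θdotstar t)
    (x : ℝ → ℝ × ℝ) (η : ℝ → ℝ)
    (hdyn : ∀ t ∈ Set.Icc tstar T,
      HasDerivAt x (-η t • (Real.cos (θ t), Real.sin (θ t)) + ((0:ℝ), (3:ℝ))) t)
    (hslide : ∀ t ∈ Set.Icc tstar T,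
      (x t).1 * Real.cos (θ t) + (x t).2 * Real.sin (θ t) = 0)
    (hη : ∀ t ∈ Set.Icc tstar T,
      η t = 3 * Real.sin (θ t) -
        θdotstar * ((x t).1 * Real.sin (θ t) - (x t).2 * Real.cos (θ t))) :
    (∀ᵐ t ∂(volume.restrict (Set.Icc tstar T)),
      HasDerivAt η (6 * θdotstar * Real.cos (θ t)) t) ∧
    (∀ t ∈ Set.Icc tstar T,
      η t = η tstar +
        6 * (Real.sin (θdotstar * (t - tstar) + θ tstar) - Real.sin (θ tstar))) := by
  set η' : ℝ → ℝ := fun t => 3 * Real.sin (θ t) -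
      θdotstar * ((x t).1 * Real.sin (θ t) - (x t).2 * Real.cos (θ t)) with hη'def
  -- derivative of the auxiliary function
  have hder : ∀ t ∈ Set.Icc tstar T, HasDerivAt η' (6 * θdotstar * Real.cos (θ t)) t := by
    intro t ht
    have hθt := hθ t ht
    have hxt := hdyn t ht
    have hx1 : HasDerivAt (fun s => (x s).1) (-η t * Real.cos (θ t)) t := by
      have := (hxt.hasFDerivAt.fst).hasDerivAt
      simpa using this
    have hx2 : HasDerivAt (fun s => (x s).2) (-η t * Real.sin (θ t) + 3) t := by
      have := (hxt.hasFDerivAt.snd).hasDerivAt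
      simpa using this
    have hsin : HasDerivAt (fun s => Real.sin (θ s)) (Real.cos (θ t) * θdotstar) t :=
      (Real.hasDerivAt_sin (θ t)).comp t hθt
    have hcos : HasDerivAt (fun s => Real.cos (θ s)) (-Real.sin (θ t) * θdotstar) t :=
      (Real.hasDerivAt_cos (θ t)).comp t hθt
    have H : HasDerivAt η'
        (3 * (Real.cos (θ t) * θdotstar) -
          θdotstar * (((-η t * Real.cos (θ t)) * Real.sin (θ t) +
              (x t).1 * (Real.cos (θ t) * θdotstar)) -
            ((-η t * Real.sin (θ t) + 3) * Real.cos (θ t) +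
              (x t).2 * (-Real.sin (θ t) * θdotstar)))) t := by
      exact ((hsin.const_mul 3).sub
        (((hx1.mul hsin).sub (hx2.mul hcos)).const_mul θdotstar))
    convert H using 1
    have hs := hslide t ht
    nlinarith [hs, sq_nonneg θdotstar]
  have hIcc : MeasurableSet (Set.Icc tstar T) := measurableSet_Icc
  -- part 1
  have part1 : ∀ᵐ t ∂(volume.restrict (Set.Icc tstar T)),
      HasDerivAt η (6 * θdotstar * Real.cos (θ t)) t := by
    have hae : ∀ᵐ t ∂(volume.restrict (Set.Icc tstar T)), t ∈ Set.Ioo tstar T := by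
      rw [ae_restrict_iff' hIcc]
      have hz : volume ({tstar, T} : Set ℝ) = 0 :=
        (Set.Finite.measure_zero (Set.toFinite _) volume)
      refine (ae_iff.2 (measure_mono_null ?_ hz))
      intro t ht
      simp only [Set.mem_setOf_eq, not_forall] at ht
      obtain ⟨h1, h2⟩ := ht
      simp only [Set.mem_Icc] at h1
      simp only [Set.mem_Ioo, not_and_or, not_lt] at h2
      simp only [Set.mem_insert_iff, Set.mem_singleton_iff]
      rcases h2 with h | h
      · exact Or.inl (le_antisymm h h1.1)
      · exact Or.inr (le_antisymm h1.2 h)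
    filter_upwards [hae] with t ht
    have hmem : Set.Icc tstar T ∈ nhds t := Icc_mem_nhds ht.1 ht.2
    have heq : η =ᶠ[nhds t] η' :=
      Filter.eventuallyEq_of_mem hmem (fun s hs => hη s hs)
    exact (hder t (Set.Ioo_subset_Icc_self ht)).congr_of_eventuallyEq heq
  refine ⟨part1, ?_⟩
  -- θ is affine on Icc
  have hcontθ : ContinuousOn θ (Set.Icc tstar T) :=
    fun t ht => ((hθ t ht).continuousAt).continuousWithinAt
  have hθaff : ∀ t ∈ Set.Icc tstar T, θ t = θdotstar * (t - tstar) + θ tstar := by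
    have := constant_of_has_deriv_right_zero (f := fun t => θ t - θdotstar * t)
      (a := tstar) (b := T)
      (by exact hcontθ.sub ((continuous_const.mul continuous_id).continuousOn))
      (by
        intro t ht
        have h := ((hθ t (Set.Ico_subset_Icc_self ht)).sub
          ((hasDerivAt_id t).const_mul θdotstar))
        simpa [Pi.sub_def] using h.hasDerivWithinAt)
    intro t ht
    have := this t ht
    ring_nf at this ⊢
    linarith
  -- continuity of η on Icc
  have hcontx : ContinuousOn x (Set.Icc tstar T) :=
    fun t ht => ((hdyn t ht).continuousAt).continuousWithinAt
  have hcontη' : ContinuousOn η' (Set.Icc tstar T) := by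
    apply ContinuousOn.sub
    · exact continuousOn_const.mul (Real.continuous_sin.comp_continuousOn hcontθ)
    · exact continuousOn_const.mul ((hcontx.fst.mul
        (Real.continuous_sin.comp_continuousOn hcontθ)).sub
        (hcontx.snd.mul (Real.continuous_cos.comp_continuousOn hcontθ)))
  have hcontη : ContinuousOn η (Set.Icc tstar T) := hcontη'.congr hη
  -- the function g = η - F has right derivative 0
  set F : ℝ → ℝ := fun t => η tstar +
      6 * (Real.sin (θdotstar * (t - tstar) + θ tstar) - Real.sin (θ tstar)) with hFdef
  have hFder : ∀ t, HasDerivAt F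
      (6 * (Real.cos (θdotstar * (t - tstar) + θ tstar) * θdotstar)) t := by
    intro t
    have h1 : HasDerivAt (fun s => θdotstar * (s - tstar) + θ tstar) θdotstar t := by
      have := (((hasDerivAt_id t).sub_const tstar).const_mul θdotstar).add_const (θ tstar)
      simpa using this
    have h2 := (Real.hasDerivAt_sin (θdotstar * (t - tstar) + θ tstar)).comp t h1
    have h3 := ((h2.sub_const (Real.sin (θ tstar))).const_mul 6).const_add (η tstar)
    simpa [hFdef] using h3
  have hcontg : ContinuousOn (fun t => η t - F t) (Set.Icc tstar T) :=
    hcontη.sub (Continuous.continuousOn (by fun_prop))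
  have hgder : ∀ t ∈ Set.Ico tstar T,
      HasDerivWithinAt (fun t => η t - F t) 0 (Set.Ici t) t := by
    intro t ht
    have htI : t ∈ Set.Icc tstar T := Set.Ico_subset_Icc_self ht
    have hmem : Set.Icc tstar T ∈ nhdsWithin t (Set.Ici t) := by
      apply Filter.mem_of_superset (Filter.inter_mem
        (nhdsWithin_le_nhds (Iic_mem_nhds ht.2)) self_mem_nhdsWithin)
      intro s hs
      exact ⟨le_trans ht.1 hs.2, hs.1⟩
    have hηw : HasDerivWithinAt η (6 * θdotstar * Real.cos (θ t)) (Set.Ici t) t := by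
      refine ((hder t htI).hasDerivWithinAt).congr_of_eventuallyEq ?_ (hη t htI)
      exact Filter.eventuallyEq_of_mem hmem (fun s hs => hη s hs)
    have hFw := (hFder t).hasDerivWithinAt (s := Set.Ici t)
    have := hηw.sub hFw
    have hθeq := hθaff t htI
    rw [← hθeq] at this
    exact this.congr_deriv (by ring)
  have hconst := constant_of_has_deriv_right_zero hcontg hgder
  intro t ht
  have h1 := hconst t ht
  have h2 : F tstar = η tstar := by simp [hFdef]
  have : η t - F t = η tstar - F tstar := h1
  rw [h2] at this
  have : η t = F t := by linarith
  simpa [hFdef] using this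
end
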